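/- Dirac structures on a finite-dimensional real vector space V are in bijection with pairs (R, Ω) where R ⊆ V is a subspace and Ω is a skew-symmetric bilinear form on R: given L, set R = ρ(L) and Ω_L(x)(y) = η(y) for any η ∈ V* with (x,η) ∈ L (which is well defined); conversely, given (R,Ω), the set L = {(x,η) : x ∈ R, η ∈ V*, η|_R = Ω(x,·)} is a Dirac structure with ρ(L) = R and Ω_L = Ω. Moreover ker Ω_L = V ∩ L. -/

import Mathlib

open Module LinearMap

variable {V W U : Type*} [AddCommGroup V] [Module ℝ V] [FiniteDimensional ℝ V]
  [AddCommGroup W] [Module ℝ W] [FiniteDimensional ℝ W]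
  [AddCommGroup U] [Module ℝ U] [FiniteDimensional ℝ U]

/-- The canonical symmetric pairing on `V ⊕ V*`. -/
noncomputable def diracPairing (p q : V × Module.Dual ℝ V) : ℝ := (p.2 q.1 + q.2 p.1) / 2

/-- A subspace of `V ⊕ V*` is isotropic if the pairing vanishes on it. -/
def IsIsotropic (L : Submodule ℝ (V × Module.Dual ℝ V)) : Prop :=
  ∀ p ∈ L, ∀ q ∈ L, diracPairing p q = 0

/-- A Dirac structure: a maximally isotropic subspace. -/
def IsDirac (L : Submodule ℝ (V × Module.Dual ℝ V)) : Prop :=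
  IsIsotropic L ∧ ∀ L' : Submodule ℝ (V × Module.Dual ℝ V), IsIsotropic L' → L ≤ L' → L' = L

/-- The graph of a bivector `π : V* → V`. -/
def graphBiv (π : Module.Dual ℝ V →ₗ[ℝ] V) : Submodule ℝ (V × Module.Dual ℝ V) where
  carrier := {p | p.1 = π p.2}
  add_mem' := by
    intro a b ha hb
    simp only [Set.mem_setOf_eq, Prod.fst_add, Prod.snd_add, map_add] at *
    rw [ha, hb]
  zero_mem' := by simp
  smul_mem' := by
    intro c a ha
    simp only [Set.mem_setOf_eq, Prod.smul_fst, Prod.smul_snd, map_smul] at *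
    rw [ha]

/-- Forward image of a Dirac structure along a linear map. -/
def Fwd (φ : V →ₗ[ℝ] W) (L : Submodule ℝ (V × Module.Dual ℝ V)) :
    Submodule ℝ (W × Module.Dual ℝ W) where
  carrier := {q | ∃ x : V, q.1 = φ x ∧ (x, φ.dualMap q.2) ∈ L}
  add_mem' := by
    rintro a b ⟨x, hx, hxL⟩ ⟨y, hy, hyL⟩
    refine ⟨x + y, ?_, ?_⟩
    · simp [Prod.fst_add, hx, hy]
    · simpa [Prod.snd_add, Prod.mk_add_mk] using L.add_mem hxL hyL
  zero_mem' := ⟨0, by simp, by simp only [Prod.fst_zero, Prod.snd_zero, map_zero]; exact L.zero_mem⟩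
  smul_mem' := by
    rintro c a ⟨x, hx, hxL⟩
    refine ⟨c • x, ?_, ?_⟩
    · simp [Prod.smul_fst, hx]
    · simpa [Prod.smul_snd, Prod.smul_mk] using L.smul_mem c hxL

/-- Backward image of a Dirac structure along a linear map. -/
def Bwd (φ : V →ₗ[ℝ] W) (L : Submodule ℝ (W × Module.Dual ℝ W)) :
    Submodule ℝ (V × Module.Dual ℝ V) where
  carrier := {p | ∃ η : Module.Dual ℝ W, p.2 = φ.dualMap η ∧ (φ p.1, η) ∈ L}
  add_mem' := by
    rintro a b ⟨x, hx, hxL⟩ ⟨y, hy, hyL⟩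
    refine ⟨x + y, ?_, ?_⟩
    · simp [Prod.snd_add, hx, hy]
    · simpa [Prod.fst_add, Prod.mk_add_mk] using L.add_mem hxL hyL
  zero_mem' := ⟨0, by simp, by simp only [Prod.fst_zero, Prod.snd_zero, map_zero]; exact L.zero_mem⟩
  smul_mem' := by
    rintro c a ⟨x, hx, hxL⟩
    refine ⟨c • x, ?_, ?_⟩
    · simp [Prod.smul_snd, hx]
    · simpa [Prod.smul_fst, Prod.smul_mk] using L.smul_mem c hxL

/-- Gauge transformation of a Dirac structure by a 2-form `B : V → V*`. -/
def tau (B : V →ₗ[ℝ] Module.Dual ℝ V) (L : Submodule ℝ (V × Module.Dual ℝ V)) :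
    Submodule ℝ (V × Module.Dual ℝ V) where
  carrier := {p | (p.1, p.2 - B p.1) ∈ L}
  add_mem' := by
    intro a b ha hb
    have := L.add_mem ha hb
    simpa [Prod.mk_add_mk, Prod.fst_add, Prod.snd_add, map_add, add_sub_add_comm] using this
  zero_mem' := by
    change ((0 : V × Module.Dual ℝ V).1, (0 : V × Module.Dual ℝ V).2 - B (0 : V × Module.Dual ℝ V).1) ∈ L
    simp only [Prod.fst_zero, Prod.snd_zero, map_zero, sub_zero]; exact L.zero_mem
  smul_mem' := by
    intro c a ha
    have := L.smul_mem c ha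
    simpa [Prod.smul_mk, Prod.smul_fst, Prod.smul_snd, smul_sub] using this

/-- Orthogonal of a subspace with respect to a bilinear form `Ω : V → V*`. -/
def orth (Ω : V →ₗ[ℝ] Module.Dual ℝ V) (S : Submodule ℝ V) : Submodule ℝ V where
  carrier := {x | ∀ y ∈ S, Ω x y = 0}
  add_mem' := by
    intro a b ha hb y hy
    simp [map_add, ha y hy, hb y hy]
  zero_mem' := by simp
  smul_mem' := by
    intro c a ha y hy
    simp [ha y hy]

/-- Pullback of a 2-form along a linear map. -/
def pb (φ : V →ₗ[ℝ] W) (B : W →ₗ[ℝ] Module.Dual ℝ W) : V →ₗ[ℝ] Module.Dual ℝ V :=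
  φ.dualMap ∘ₗ B ∘ₗ φ

/-- The Dirac structure associated to a pair `(R, Ω)` of a subspace and a skew form on it. -/
def diracOfForm (R : Submodule ℝ V) (Ω : R →ₗ[ℝ] Module.Dual ℝ R) :
    Submodule ℝ (V × Module.Dual ℝ V) where
  carrier := {p | ∃ hx : p.1 ∈ R, ∀ y : R, p.2 y = Ω ⟨p.1, hx⟩ y}
  add_mem' := by
    rintro a b ⟨ha, Ha⟩ ⟨hb, Hb⟩
    refine ⟨R.add_mem ha hb, fun y => ?_⟩
    have h : (⟨(a + b).1, R.add_mem ha hb⟩ : R) = ⟨a.1, ha⟩ + ⟨b.1, hb⟩ := rfl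
    rw [h, map_add]
    simp [Prod.snd_add, Ha y, Hb y]
  zero_mem' := by
    refine ⟨R.zero_mem, fun y => ?_⟩
    have h : (⟨((0 : V × Module.Dual ℝ V)).1, R.zero_mem⟩ : R) = 0 := rfl
    rw [h, map_zero]
    rfl
  smul_mem' := by
    rintro c a ⟨ha, Ha⟩
    refine ⟨R.smul_mem c ha, fun y => ?_⟩
    have h : (⟨(c • a).1, R.smul_mem c ha⟩ : R) = c • ⟨a.1, ha⟩ := rfl
    rw [h, map_smul]
    simp [Prod.smul_snd, Ha y]


/-!
Isotropy of `L` means `η y = -μ x` whenever `(x, η), (y, μ) ∈ L`. Taking `x = 0` shows that every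
`(0, η) ∈ L` kills `ρ(L)`, so the restriction of `η` to `ρ(L)` depends only on `x`; choosing the
covectors through a linear section of `ρ : L → ρ(L)` yields a skew form `Ω` with
`L ≤ diracOfForm ρ(L) Ω`, and maximality turns this into an equality. Conversely, any `(x, η)` in
an isotropic extension of `diracOfForm R Ω` has `x ∈ R` (pair it with `(0, μ)`, `μ ∈ R⁰`) and
`η|_R = Ω x` (pair it with `(y, ζ)`, `ζ` extending `Ω y`), so `diracOfForm R Ω` is maximal.
-/

section

variable {E : Type*} [AddCommGroup E] [Module ℝ E]

theorem IsIsotropic.apply_fst_eq_neg {L : Submodule ℝ (E × Dual ℝ E)} (hL : IsIsotropic L)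
    {p q : E × Dual ℝ E} (hp : p ∈ L) (hq : q ∈ L) : p.2 q.1 = -q.2 p.1 := by
  have h := hL p hp q hq
  rw [diracPairing] at h
  linarith

theorem IsIsotropic.apply_eq_of_mem {L : Submodule ℝ (E × Dual ℝ E)} (hL : IsIsotropic L)
    {x y : E} {η₁ η₂ μ : Dual ℝ E} (h₁ : (x, η₁) ∈ L) (h₂ : (x, η₂) ∈ L) (hy : (y, μ) ∈ L) :
    η₁ y = η₂ y := by
  have h := hL.apply_fst_eq_neg (L.sub_mem h₁ h₂) hy
  simpa [sub_eq_zero] using h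

variable {R : Submodule ℝ E} {Ω : R →ₗ[ℝ] Dual ℝ R}

theorem coe_mk_mem_diracOfForm {x : R} {η : Dual ℝ E} :
    ((x : E), η) ∈ diracOfForm R Ω ↔ ∀ y : R, η y = Ω x y :=
  ⟨fun ⟨_, h⟩ => h, fun h => ⟨x.2, h⟩⟩

theorem zero_mk_mem_diracOfForm {η : Dual ℝ E} :
    ((0 : E), η) ∈ diracOfForm R Ω ↔ ∀ y ∈ R, η y = 0 := by
  rw [← R.coe_zero, coe_mk_mem_diracOfForm, map_zero]
  exact ⟨fun h y hy => h ⟨y, hy⟩, fun h y => h y y.2⟩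

theorem exists_mk_mem_diracOfForm (x : R) : ∃ η : Dual ℝ E, ((x : E), η) ∈ diracOfForm R Ω := by
  obtain ⟨η, hη⟩ := LinearMap.exists_extend (Ω x)
  exact ⟨η, coe_mk_mem_diracOfForm.2 fun y => LinearMap.congr_fun hη y⟩

variable (R Ω) in
theorem map_fst_diracOfForm : (diracOfForm R Ω).map (fst ℝ E (Dual ℝ E)) = R := by
  refine le_antisymm ?_ fun x hx => ?_
  · rintro _ ⟨⟨x, η⟩, ⟨hx, -⟩, rfl⟩
    exact hx
  · obtain ⟨η, hη⟩ := exists_mk_mem_diracOfForm (Ω := Ω) ⟨x, hx⟩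
    exact ⟨_, hη, rfl⟩

theorem isIsotropic_diracOfForm (hΩ : ∀ x y : R, Ω x y = -Ω y x) :
    IsIsotropic (diracOfForm R Ω) := by
  rintro ⟨x, η⟩ ⟨hx, hη⟩ ⟨y, μ⟩ ⟨hy, hμ⟩
  rw [diracPairing, hη ⟨y, hy⟩, hμ ⟨x, hx⟩, hΩ]
  ring

theorem isDirac_diracOfForm (hΩ : ∀ x y : R, Ω x y = -Ω y x) : IsDirac (diracOfForm R Ω) := by
  refine ⟨isIsotropic_diracOfForm hΩ, fun L hL hle => le_antisymm (fun ⟨x, η⟩ hxη => ?_) hle⟩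
  have hx : x ∈ R := by
    refine (Subspace.forall_mem_dualAnnihilator_apply_eq_zero_iff R x).1 fun μ hμ => ?_
    have hμL : ((0 : E), μ) ∈ L :=
      hle (zero_mk_mem_diracOfForm.2 fun y hy => (Submodule.mem_dualAnnihilator μ).1 hμ y hy)
    simpa using hL.apply_fst_eq_neg hμL hxη
  refine ⟨hx, fun y => ?_⟩
  obtain ⟨ζ, hζ⟩ := exists_mk_mem_diracOfForm (Ω := Ω) y
  have h := hL.apply_fst_eq_neg hxη (hle hζ)
  rw [show ζ x = Ω y ⟨x, hx⟩ from coe_mk_mem_diracOfForm.1 hζ ⟨x, hx⟩, hΩ] at h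
  simpa using h

theorem IsIsotropic.exists_le_diracOfForm {L : Submodule ℝ (E × Dual ℝ E)} (hL : IsIsotropic L) :
    ∃ Ω : L.map (fst ℝ E (Dual ℝ E)) →ₗ[ℝ] Dual ℝ (L.map (fst ℝ E (Dual ℝ E))),
      (∀ x y, Ω x y = -Ω y x) ∧ L ≤ diracOfForm _ Ω := by
  set R := L.map (fst ℝ E (Dual ℝ E))
  obtain ⟨s, hs⟩ := ((fst ℝ E (Dual ℝ E)).submoduleMap L).exists_rightInverse_of_surjective
    (range_eq_top.2 (submoduleMap_surjective _ L))
  have hs_fst (x : R) : (s x : E × Dual ℝ E).1 = x :=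
    congr_arg Subtype.val (LinearMap.congr_fun hs x)
  have hs_mem (x : R) : ((x : E), (s x : E × Dual ℝ E).2) ∈ L := by
    simpa only [← hs_fst x] using (s x).2
  refine ⟨R.subtype.dualMap ∘ₗ snd ℝ E (Dual ℝ E) ∘ₗ L.subtype ∘ₗ s, fun x y => ?_, ?_⟩
  · simpa [hs_fst] using hL.apply_fst_eq_neg (s x).2 (s y).2
  · rintro ⟨x, η⟩ hxη
    refine ⟨⟨_, hxη, rfl⟩, ?_⟩
    rintro ⟨_, ⟨y, μ⟩, hyμ, rfl⟩
    exact hL.apply_eq_of_mem hxη (hs_mem ⟨x, _⟩) hyμ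

theorem IsDirac.exists_diracOfForm_eq {L : Submodule ℝ (E × Dual ℝ E)} (hL : IsDirac L) :
    ∃ Ω : L.map (fst ℝ E (Dual ℝ E)) →ₗ[ℝ] Dual ℝ (L.map (fst ℝ E (Dual ℝ E))),
      (∀ x y, Ω x y = -Ω y x) ∧ diracOfForm _ Ω = L := by
  obtain ⟨Ω, hΩ, hle⟩ := hL.1.exists_le_diracOfForm
  exact ⟨Ω, hΩ, hL.2 _ (isIsotropic_diracOfForm hΩ) hle⟩

theorem IsDirac.zero_mk_mem_iff {L : Submodule ℝ (E × Dual ℝ E)} (hL : IsDirac L)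
    {η : Dual ℝ E} : ((0 : E), η) ∈ L ↔ ∀ y ∈ L.map (fst ℝ E (Dual ℝ E)), η y = 0 := by
  obtain ⟨Ω, -, hΩL⟩ := hL.exists_diracOfForm_eq
  have h := zero_mk_mem_diracOfForm (Ω := Ω) (η := η)
  rwa [hΩL] at h

end

/-- Dirac structures on `V` correspond to pairs `(R, Ω)` of a subspace `R ⊆ V`
and a skew form `Ω` on `R`; moreover `ker Ω_L = V ∩ L`. -/
theorem stmt_4 :
    -- the form `Ω_L(x)(y) = η(y)` for `(x,η) ∈ L` is well defined
    (∀ L : Submodule ℝ (V × Module.Dual ℝ V), IsDirac L →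
      ∀ (x : V) (η₁ η₂ : Module.Dual ℝ V), (x, η₁) ∈ L → (x, η₂) ∈ L →
        ∀ y : V, (∃ μ, (y, μ) ∈ L) → η₁ y = η₂ y) ∧
    -- a pair `(R, Ω)` gives a Dirac structure with `ρ(L) = R` and `Ω_L = Ω`
    (∀ (R : Submodule ℝ V) (Ω : R →ₗ[ℝ] Module.Dual ℝ R),
      (∀ x y : R, Ω x y = - Ω y x) →
      IsDirac (diracOfForm R Ω) ∧
      Submodule.map (LinearMap.fst ℝ V (Module.Dual ℝ V)) (diracOfForm R Ω) = R ∧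
      (∀ (x : R) (η : Module.Dual ℝ V), ((x : V), η) ∈ diracOfForm R Ω →
        ∀ y : R, η y = Ω x y)) ∧
    -- every Dirac structure arises this way
    (∀ L : Submodule ℝ (V × Module.Dual ℝ V), IsDirac L →
      ∃ (R : Submodule ℝ V) (Ω : R →ₗ[ℝ] Module.Dual ℝ R),
        (∀ x y : R, Ω x y = - Ω y x) ∧ diracOfForm R Ω = L) ∧
    -- `ker Ω_L = V ∩ L`
    (∀ L : Submodule ℝ (V × Module.Dual ℝ V), IsDirac L → ∀ x : V,
      ((x, (0 : Module.Dual ℝ V)) ∈ L ↔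
        ∃ η : Module.Dual ℝ V, (x, η) ∈ L ∧
          ∀ y ∈ Submodule.map (LinearMap.fst ℝ V (Module.Dual ℝ V)) L, η y = 0)) := by
  refine ⟨fun L hL x η₁ η₂ h₁ h₂ y ⟨μ, hy⟩ => hL.1.apply_eq_of_mem h₁ h₂ hy,
    fun R Ω hΩ => ⟨isDirac_diracOfForm hΩ, map_fst_diracOfForm R Ω,
      fun x η h => coe_mk_mem_diracOfForm.1 h⟩,
    fun L hL => ⟨_, hL.exists_diracOfForm_eq⟩, fun L hL x => ⟨fun h => ⟨0, h, fun _ _ => rfl⟩, ?_⟩⟩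
  rintro ⟨η, hxη, hη⟩
  simpa using L.sub_mem hxη (hL.zero_mk_mem_iff.2 hη)
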